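/- arXiv:2405.14509 — 2 statements merged into one kernel-verified Lean document; each statement's English description precedes it below -/
import Mathlib

section
/- The function x ↦ log(x) - ψ(x) is positive and strictly decreasing on (0, ∞), and tends to 0 as x → ∞, where ψ is the digamma function. -/
open Real Filter

/-- The digamma function: derivative of `log ∘ Γ`. -/
noncomputable def digamma (x : ℝ) : ℝ := deriv (fun y : ℝ => Real.log (Real.Gamma y)) x

section aux

lemma dig_hder {x : ℝ} (hx : 0 < x) : DifferentiableAt ℝ (Real.log ∘ Real.Gamma) x := by
  refine ((Real.differentiableAt_Gamma ?_).log (Real.Gamma_ne_zero ?_)) <;>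
  exact fun m ↦ ne_of_gt (by have : (0:ℝ) ≤ m := m.cast_nonneg; linarith)

lemma dig_eq (x : ℝ) : digamma x = deriv (Real.log ∘ Real.Gamma) x := rfl

lemma dig_rec {x : ℝ} (hx : 0 < x) : digamma (x + 1) = digamma x + 1 / x := by
  have h_rec : ∀ y : ℝ, 0 < y →
      (Real.log ∘ Real.Gamma) (y + 1) = (Real.log ∘ Real.Gamma) y + Real.log y := by
    intro y hy
    simp only [Function.comp_apply, Real.Gamma_add_one hy.ne',
      Real.log_mul hy.ne' (Real.Gamma_pos_of_pos hy).ne', add_comm]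
  rw [dig_eq, dig_eq]
  rw [← deriv_comp_add_const, one_div, ← Real.deriv_log,
    ← deriv_add (dig_hder hx) (Real.differentiableAt_log hx.ne')]
  apply Filter.EventuallyEq.deriv_eq
  filter_upwards [eventually_gt_nhds hx] using h_rec

lemma dig_bounds {x : ℝ} (hx : 0 < x) :
    0 ≤ Real.log x - digamma x ∧ Real.log x - digamma x ≤ 1 / x := by
  have hc : ConvexOn ℝ (Set.Ioi 0) (Real.log ∘ Real.Gamma) := Real.convexOn_log_Gamma
  have hslope : slope (Real.log ∘ Real.Gamma) x (x + 1) = Real.log x := by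
    rw [slope_def_field, show x + 1 - x = (1:ℝ) by ring, div_one, Function.comp_apply,
      Function.comp_apply, Real.Gamma_add_one hx.ne',
      Real.log_mul hx.ne' (Real.Gamma_pos_of_pos hx).ne', add_sub_cancel_right]
  constructor
  · have := hc.deriv_le_slope (x := x) (y := x + 1) (Set.mem_Ioi.mpr hx)
      (Set.mem_Ioi.mpr (by linarith)) (by linarith) (dig_hder hx)
    rw [hslope] at this
    rw [dig_eq]; linarith
  · have := hc.slope_le_deriv (x := x) (y := x + 1) (Set.mem_Ioi.mpr hx)
      (Set.mem_Ioi.mpr (by linarith)) (by linarith) (dig_hder (by linarith : (0:ℝ) < x + 1))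
    rw [hslope, ← dig_eq, dig_rec hx] at this
    linarith

noncomputable def digG (t : ℝ) : ℝ := 1 / t - (Real.log (t + 1) - Real.log t)

lemma digG_pos {t : ℝ} (ht : 0 < t) : 0 < digG t := by
  have h : Real.log ((t + 1) / t) < (t + 1) / t - 1 := by
    apply Real.log_lt_sub_one_of_pos (by positivity)
    intro h
    rw [div_eq_one_iff_eq ht.ne'] at h
    linarith
  rw [Real.log_div (by positivity) ht.ne'] at h
  have h2 : (t + 1) / t - 1 = 1 / t := by field_simp; ring
  rw [h2] at h
  unfold digG; linarith

lemma digG_strictAnti : StrictAntiOn digG (Set.Ioi 0) := by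
  have key : ∀ t : ℝ, 0 < t →
      HasDerivAt digG (-(t ^ 2)⁻¹ - ((t + 1)⁻¹ - t⁻¹)) t := by
    intro t ht
    have h1 : HasDerivAt (fun y : ℝ => 1 / y) (-(t ^ 2)⁻¹) t := by
      simpa [one_div] using hasDerivAt_inv ht.ne'
    have h2 : HasDerivAt (fun y : ℝ => Real.log (y + 1)) ((t + 1)⁻¹) t := by
      simpa [Function.comp_def] using (Real.hasDerivAt_log (by linarith : t + 1 ≠ 0)).comp t
        ((hasDerivAt_id t).add_const 1)
    have h3 : HasDerivAt Real.log t⁻¹ t := Real.hasDerivAt_log ht.ne'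
    exact h1.sub (h2.sub h3)
  apply strictAntiOn_of_deriv_neg (convex_Ioi 0)
  · intro t ht
    exact ((key t ht).differentiableAt).continuousAt.continuousWithinAt
  · intro t ht
    rw [interior_Ioi] at ht
    have ht' : (0:ℝ) < t := ht
    rw [(key t ht').deriv]
    have hD : -(t ^ 2)⁻¹ - ((t + 1)⁻¹ - t⁻¹) = -(1 / (t ^ 2 * (t + 1))) := by
      field_simp
      ring
    rw [hD]
    have : 0 < 1 / (t ^ 2 * (t + 1)) := by positivity
    linarith

lemma dig_F_rec {x : ℝ} (hx : 0 < x) :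
    Real.log x - digamma x = digG x + (Real.log (x + 1) - digamma (x + 1)) := by
  rw [dig_rec hx]; unfold digG; ring

lemma dig_F_telescope {x : ℝ} (hx : 0 < x) (n : ℕ) :
    Real.log x - digamma x =
      (∑ k ∈ Finset.range n, digG (x + k)) + (Real.log (x + n) - digamma (x + n)) := by
  induction n with
  | zero => simp
  | succ n ih =>
    rw [ih, Finset.sum_range_succ]
    have h : Real.log (x + n) - digamma (x + n)
        = digG (x + n) + (Real.log (x + n + 1) - digamma (x + n + 1)) :=
      dig_F_rec (by positivity)
    rw [h]
    push_cast
    ring_nf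

lemma dig_F_tendsto_nat (x : ℝ) (hx : 0 < x) :
    Tendsto (fun n : ℕ => Real.log (x + n) - digamma (x + n)) atTop (nhds 0) := by
  have hb : Tendsto (fun n : ℕ => 1 / (x + n)) atTop (nhds 0) := by
    simp only [one_div]
    exact tendsto_inv_atTop_zero.comp
      (tendsto_atTop_add_const_left _ x tendsto_natCast_atTop_atTop)
  refine squeeze_zero (fun n => (dig_bounds (by positivity : (0:ℝ) < x + n)).1)
    (fun n => (dig_bounds (by positivity : (0:ℝ) < x + n)).2) hb

end aux

/-- `x ↦ log x - ψ(x)` is positive and strictly decreasing on `(0,∞)`, and tends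
to `0` as `x → ∞`. -/
theorem log_sub_digamma_pos_strictAnti_tendsto_zero :
    (∀ x : ℝ, 0 < x → 0 < Real.log x - digamma x) ∧
      StrictAntiOn (fun x : ℝ => Real.log x - digamma x) (Set.Ioi 0) ∧
      Tendsto (fun x : ℝ => Real.log x - digamma x) atTop (nhds 0) := by
  refine ⟨?_, ?_, ?_⟩
  · intro x hx
    have h1 := dig_F_rec hx
    have h2 := (dig_bounds (by linarith : (0:ℝ) < x + 1)).1
    have h3 := digG_pos hx
    linarith
  · intro x hx y hy hxy
    simp only [Set.mem_Ioi] at hx hy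
    have key : ∀ n : ℕ, 1 ≤ n →
        (Real.log x - digamma x) - (Real.log y - digamma y)
          - ((Real.log (x + n) - digamma (x + n)) - (Real.log (y + n) - digamma (y + n)))
          = ∑ k ∈ Finset.range n, (digG (x + k) - digG (y + k)) := by
      intro n hn
      rw [dig_F_telescope hx n, dig_F_telescope hy n, Finset.sum_sub_distrib]
      ring
    have hlim : Tendsto (fun n : ℕ =>
        (Real.log x - digamma x) - (Real.log y - digamma y)
          - ((Real.log (x + n) - digamma (x + n)) - (Real.log (y + n) - digamma (y + n))))
        atTop (nhds ((Real.log x - digamma x) - (Real.log y - digamma y))) := by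
      have := (dig_F_tendsto_nat x hx).sub (dig_F_tendsto_nat y hy)
      simpa using (tendsto_const_nhds (x := (Real.log x - digamma x) - (Real.log y - digamma y))).sub this
    have hge : digG x - digG y ≤ (Real.log x - digamma x) - (Real.log y - digamma y) := by
      apply ge_of_tendsto hlim
      filter_upwards [eventually_ge_atTop 1] with n hn
      rw [key n hn]
      have h0 : digG x - digG y ≤ ∑ k ∈ Finset.range 1, (digG (x + k) - digG (y + k)) := by
        simp
      refine h0.trans ?_
      apply Finset.sum_le_sum_of_subset_of_nonneg
      · exact Finset.range_subset_range.mpr hn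
      · intro k _ _
        have hk : digG (y + k) ≤ digG (x + k) :=
          le_of_lt (digG_strictAnti (Set.mem_Ioi.mpr (by positivity)) (Set.mem_Ioi.mpr (by positivity)) (by linarith))
        linarith
    have hgt : 0 < digG x - digG y := sub_pos.mpr
      (digG_strictAnti (Set.mem_Ioi.mpr hx) (Set.mem_Ioi.mpr hy) hxy)
    show Real.log y - digamma y < Real.log x - digamma x
    linarith
  · have h0 : Tendsto (fun x : ℝ => 1 / x) atTop (nhds 0) := by
      simpa [one_div] using (tendsto_inv_atTop_zero (𝕜 := ℝ))
    apply squeeze_zero' ?_ ?_ h0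
    · filter_upwards [eventually_gt_atTop 0] with x hx using (dig_bounds hx).1
    · filter_upwards [eventually_gt_atTop 0] with x hx using (dig_bounds hx).2
end

section
/- Let y₁, …, yₙ be positive real numbers and let H = log((1/n) Σᵢ yᵢ) - (1/n) Σᵢ log(yᵢ). If not all yᵢ are equal (so H > 0), then there exists a unique μ > 0 such that log(μ) - ψ(μ) = H, where ψ is the digamma function. -/
open Real Finset

lemma hasDerivAt_logGamma {t : ℝ} (ht : 0 < t) :
    HasDerivAt (fun y : ℝ => Real.log (Real.Gamma y)) (digamma t) t := by
  have hd : DifferentiableAt ℝ Real.Gamma t :=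
    Real.differentiableAt_Gamma fun m =>
      ne_of_gt (lt_of_le_of_lt (neg_nonpos.mpr (Nat.cast_nonneg m)) ht)
  have h : DifferentiableAt ℝ (fun y : ℝ => Real.log (Real.Gamma y)) t :=
    hd.log (Real.Gamma_pos_of_pos ht).ne'
  simpa [digamma] using h.hasDerivAt

lemma logGamma_add_one {t : ℝ} (ht : 0 < t) :
    Real.log (Real.Gamma (t + 1)) = Real.log t + Real.log (Real.Gamma t) := by
  rw [Real.Gamma_add_one ht.ne', Real.log_mul ht.ne' (Real.Gamma_pos_of_pos ht).ne']

lemma digamma_add_one {t : ℝ} (ht : 0 < t) : digamma (t + 1) = digamma t + 1 / t := by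
  have h1 : HasDerivAt (fun y : ℝ => Real.log (Real.Gamma (y + 1))) (digamma (t + 1) * 1) t :=
    (hasDerivAt_logGamma (by linarith)).comp t ((hasDerivAt_id t).add_const 1)
  have h2 : (fun y : ℝ => Real.log (Real.Gamma (y + 1))) =ᶠ[nhds t]
      (fun y : ℝ => Real.log y + Real.log (Real.Gamma y)) := by
    filter_upwards [eventually_gt_nhds ht] with y hy using logGamma_add_one hy
  have h3 : HasDerivAt (fun y : ℝ => Real.log y + Real.log (Real.Gamma y))
      (t⁻¹ + digamma t) t := (Real.hasDerivAt_log ht.ne').add (hasDerivAt_logGamma ht)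
  have := (h1.congr_of_eventuallyEq h2.symm).unique h3
  rw [mul_one] at this
  rw [this, one_div]; ring

lemma digamma_le_log {t : ℝ} (ht : 0 < t) : digamma t ≤ Real.log t := by
  have h := Real.convexOn_log_Gamma.le_slope_of_hasDerivAt (Set.mem_Ioi.mpr ht)
    (Set.mem_Ioi.mpr (by linarith : (0:ℝ) < t + 1)) (by linarith) (hasDerivAt_logGamma ht)
  rwa [slope_def_field, Function.comp, Function.comp, logGamma_add_one ht,
    show t + 1 - t = 1 by ring, add_sub_cancel_right, div_one] at h

lemma log_le_digamma_add_one {t : ℝ} (ht : 0 < t) :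
    Real.log t ≤ digamma t + 1 / t := by
  have h := Real.convexOn_log_Gamma.slope_le_of_hasDerivAt (Set.mem_Ioi.mpr ht)
    (Set.mem_Ioi.mpr (by linarith : (0:ℝ) < t + 1)) (by linarith)
    (hasDerivAt_logGamma (by linarith : (0:ℝ) < t + 1))
  rw [slope_def_field, Function.comp, Function.comp, logGamma_add_one ht,
    show t + 1 - t = 1 by ring, add_sub_cancel_right, div_one] at h
  calc Real.log t ≤ digamma (t + 1) := h
    _ = digamma t + 1 / t := digamma_add_one ht

/-- `G t = log t - ψ(t)`. -/
noncomputable def G (t : ℝ) : ℝ := Real.log t - digamma t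

/-- `φ t = 1/t - log (t+1) + log t`. -/
noncomputable def phi (t : ℝ) : ℝ := 1 / t - Real.log (t + 1) + Real.log t

lemma G_nonneg {t : ℝ} (ht : 0 < t) : 0 ≤ G t := sub_nonneg.mpr (digamma_le_log ht)

lemma G_le {t : ℝ} (ht : 0 < t) : G t ≤ 1 / t := by
  have := log_le_digamma_add_one ht
  unfold G; linarith

lemma G_eq {t : ℝ} (ht : 0 < t) : G t = G (t + 1) + phi t := by
  unfold G phi
  rw [digamma_add_one ht]; ring

lemma phi_strictAntiOn : StrictAntiOn phi (Set.Ioi 0) := by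
  have hderiv : ∀ t : ℝ, 0 < t → HasDerivAt phi (-(t^2)⁻¹ - (t+1)⁻¹ + t⁻¹) t := by
    intro t ht
    have ht1 : (0:ℝ) < t + 1 := by linarith
    have h1 : HasDerivAt (fun t : ℝ => 1 / t) (-(t^2)⁻¹) t := by
      simpa only [one_div] using hasDerivAt_inv ht.ne'
    have h2 : HasDerivAt (fun t : ℝ => Real.log (t + 1)) ((t+1)⁻¹) t := by
      have := (Real.hasDerivAt_log ht1.ne').comp t ((hasDerivAt_id t).add_const 1)
      rw [mul_one] at this; exact this
    have h3 : HasDerivAt Real.log t⁻¹ t := Real.hasDerivAt_log ht.ne'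
    exact (h1.sub h2).add h3
  apply strictAntiOn_of_deriv_neg (convex_Ioi 0)
  · intro t ht
    rw [Set.mem_Ioi] at ht
    exact ((hderiv t ht).continuousAt).continuousWithinAt
  · intro t ht
    rw [interior_Ioi, Set.mem_Ioi] at ht
    rw [(hderiv t ht).deriv]
    have ht1 : (0:ℝ) < t + 1 := by linarith
    have h4 : t⁻¹ - (t+1)⁻¹ < (t^2)⁻¹ := by
      rw [inv_sub_inv ht.ne' ht1.ne', inv_eq_one_div,
        div_lt_div_iff₀ (by positivity) (by positivity)]
      nlinarith
    linarith

lemma phi_nonneg {t : ℝ} (ht : 0 < t) : 0 ≤ phi t := by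
  have := G_le (by linarith : (0:ℝ) < t + 1)
  have := G_nonneg ht
  have := G_eq ht
  have := G_nonneg (by linarith : (0:ℝ) < t + 1)
  have hl : Real.log ((t+1)/t) ≤ (t+1)/t - 1 := Real.log_le_sub_one_of_pos (by positivity)
  rw [Real.log_div (by linarith) ht.ne'] at hl
  have : (t+1)/t - 1 = 1/t := by field_simp; ring
  unfold phi; linarith [this ▸ hl]

lemma G_telescope {t : ℝ} (ht : 0 < t) (n : ℕ) :
    G t = G (t + n) + ∑ k ∈ Finset.range n, phi (t + k) := by
  induction n with
  | zero => simp
  | succ m ih =>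
    rw [ih, Finset.sum_range_succ]
    have h := G_eq (by positivity : (0:ℝ) < t + m)
    push_cast
    rw [show t + (m + 1 : ℝ) = t + m + 1 by ring]
    linarith

lemma G_strictAntiOn : StrictAntiOn G (Set.Ioi 0) := by
  intro x hx y hy hxy
  rw [Set.mem_Ioi] at hx hy
  have hphi : 0 < phi x - phi y := sub_pos.mpr (phi_strictAntiOn hx hy hxy)
  obtain ⟨n, hn⟩ := exists_nat_one_div_lt hphi
  set N := n + 1 with hN
  have hNpos : 0 < (N:ℝ) := by positivity
  have h1 := G_telescope hx N
  have h2 := G_telescope hy N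
  have hsum : phi x - phi y ≤
      ∑ k ∈ Finset.range N, phi (x + k) - ∑ k ∈ Finset.range N, phi (y + k) := by
    rw [← Finset.sum_sub_distrib]
    have h0 : ∀ k ∈ Finset.range N, 0 ≤ phi (x + (k:ℕ)) - phi (y + (k:ℕ)) := by
      intro k _
      have : phi (y + (k:ℝ)) ≤ phi (x + (k:ℝ)) :=
        le_of_lt (phi_strictAntiOn (Set.mem_Ioi.mpr (by positivity))
          (Set.mem_Ioi.mpr (by positivity)) (by linarith : x + (k:ℝ) < y + k))
      linarith
    have := Finset.single_le_sum (f := fun k : ℕ => phi (x + k) - phi (y + k)) h0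
      (Finset.mem_range.mpr (Nat.succ_pos n))
    simpa using this
  have hGx : 0 ≤ G (x + N) := G_nonneg (by positivity)
  have hGy : G (y + N) ≤ 1 / (N:ℝ) := by
    have h := G_le (by positivity : (0:ℝ) < y + N)
    have : 1 / (y + (N:ℝ)) ≤ 1 / N := by
      apply one_div_le_one_div_of_le hNpos; linarith
    linarith
  have hn' : 1 / (N:ℝ) < phi x - phi y := by
    rw [hN]; push_cast; exact hn
  linarith [h1, h2, hsum, hGx, hGy, hn']

lemma G_hasDerivAt {t : ℝ} (ht : 0 < t) :
    HasDerivAt (fun s : ℝ => s * Real.log s - s - Real.log (Real.Gamma s)) (G t) t := by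
  have h1 : HasDerivAt (fun s : ℝ => s * Real.log s) (Real.log t + 1) t :=
    Real.hasDerivAt_mul_log ht.ne'
  have := (h1.sub (hasDerivAt_id t)).sub (hasDerivAt_logGamma ht)
  refine this.congr_deriv ?_
  unfold G; ring

/-- If the `yᵢ` are positive and not all equal, there is a unique `μ > 0` with
`log μ - ψ(μ) = log((1/n)Σ yᵢ) - (1/n)Σ log yᵢ`. -/
theorem exists_unique_mu (n : ℕ) (hn : 0 < n) (y : Fin n → ℝ)
    (hy : ∀ i, 0 < y i) (hne : ∃ i j, y i ≠ y j) :
    ∃! μ : ℝ, 0 < μ ∧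
      Real.log μ - digamma μ =
        Real.log ((1 / n) * ∑ i, y i) - (1 / n) * ∑ i, Real.log (y i) := by
  set H : ℝ := Real.log ((1 / n) * ∑ i, y i) - (1 / n) * ∑ i, Real.log (y i) with hH
  -- H > 0 by strict Jensen
  have hHpos : 0 < H := by
    obtain ⟨i, j, hij⟩ := hne
    have hj := strictConcaveOn_log_Ioi.lt_map_sum (w := fun _ : Fin n => (1:ℝ)/n)
      (p := y) (t := Finset.univ)
      (fun i _ => by positivity)
      (by simp [Finset.card_univ]; field_simp)
      (fun i _ => Set.mem_Ioi.mpr (hy i))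
      ⟨i, Finset.mem_univ i, j, Finset.mem_univ j, hij⟩
    simp only [smul_eq_mul] at hj
    rw [← Finset.mul_sum, ← Finset.mul_sum] at hj
    rw [hH]
    linarith
  -- choose a and b
  set s : ℝ := H + 3 with hs
  have hs3 : 3 ≤ s := by linarith
  set a : ℝ := 1 / s ^ 2 with ha
  have hapos : 0 < a := by positivity
  have ha1 : a ≤ 1 := by
    rw [ha, div_le_one (by positivity)]; nlinarith
  have hGa : H < G a := by
    have h1 : phi a ≤ G a := by
      have := G_eq hapos
      have := G_nonneg (by linarith : (0:ℝ) < a + 1)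
      linarith
    have hloga : Real.log a ≥ -2 * (s - 1) := by
      have h2 : Real.log s ≤ s - 1 := by
        have := Real.log_le_sub_one_of_pos (by linarith : (0:ℝ) < s)
        linarith
      have : Real.log a = -(2 * Real.log s) := by
        rw [ha, one_div, Real.log_inv, Real.log_pow]; push_cast; ring
      linarith
    have hlog2 : Real.log (a + 1) ≤ 1 := by
      calc Real.log (a + 1) ≤ (a + 1) - 1 :=
            Real.log_le_sub_one_of_pos (by linarith)
        _ ≤ 1 := by linarith
    have hia : 1 / a = s ^ 2 := by rw [ha]; field_simp
    have hphia : (s - 1) ^ 2 ≤ phi a := by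
      unfold phi; rw [hia]; nlinarith
    nlinarith
  set b : ℝ := 1 / H + 1 with hb
  have hb1 : 1 < b := by rw [hb]; have : 0 < 1/H := by positivity
                         linarith
  have hab : a < b := by
    calc a ≤ 1 := ha1
      _ < b := hb1
  have hGb : G b < H := by
    have h1 : G b ≤ 1 / b := G_le (by linarith)
    have h2 : 1 / b < H := by
      rw [hb, div_lt_iff₀ (by positivity)]
      have hH' : 0 < 1/H := by positivity
      field_simp
      nlinarith
    exact lt_of_le_of_lt h1 h2
  -- Darboux
  have hF : ∀ x ∈ Set.Icc a b, HasDerivWithinAt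
      (fun s : ℝ => s * Real.log s - s - Real.log (Real.Gamma s)) (G x) (Set.Icc a b) x := by
    intro x hx
    exact (G_hasDerivAt (lt_of_lt_of_le hapos hx.1)).hasDerivWithinAt
  obtain ⟨μ, hμmem, hμ⟩ :=
    exists_hasDerivWithinAt_eq_of_lt_of_gt (le_of_lt hab) hF hGa hGb
  have hμpos : 0 < μ := lt_trans hapos hμmem.1
  refine ⟨μ, ⟨hμpos, hμ⟩, ?_⟩
  rintro ν ⟨hνpos, hν⟩
  exact G_strictAntiOn.injOn (Set.mem_Ioi.mpr hνpos) (Set.mem_Ioi.mpr hμpos)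
    ((hν.trans hμ.symm : G ν = G μ))
end
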